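/- Let C := (ℝ × {0}) ∪ {(0,1)} ⊆ ℝ² and let f : ℝ² → ℝ be defined by f(x) = 0 if x ∈ C and f(x) = 1 otherwise. Then: (i) f is lower semicontinuous; (ii) the level convex envelope of f satisfies f^{lc}(x) = 0 if x ∈ D and f^{lc}(x) = 1 otherwise, where D := (ℝ × [0,1)) ∪ {(0,1)}; (iii) f^{lc} is not lower semicontinuous. In particular, there exists a lower semicontinuous function on ℝ² whose level convex envelope fails to be lower semicontinuous, so (f^{lc})^{ls} can be strictly smaller than (f^{ls})^{lc}. -/

import Mathlib

open Filter Topology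

variable {X : Type*}

/-- A function into the extended reals is level convex if along segments its value
is at most the maximum of the values at the endpoints. -/
def LevelConvex [AddCommGroup X] [Module ℝ X] (F : X → EReal) : Prop :=
  ∀ x y : X, ∀ t : ℝ, 0 < t → t < 1 →
    F (t • x + (1 - t) • y) ≤ max (F x) (F y)

/-- The lower semicontinuous envelope `Γ_τ(F)`: the pointwise supremum of all
lower semicontinuous functions below `F`. -/
noncomputable def lscEnv [TopologicalSpace X] (F : X → EReal) : X → EReal :=
  fun x => ⨆ G : {G : X → EReal // LowerSemicontinuous G ∧ G ≤ F}, (G : X → EReal) x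

/-- The level convex envelope `F^{lc}`: the pointwise supremum of all level convex
functions below `F`. -/
noncomputable def lcEnv [AddCommGroup X] [Module ℝ X] (F : X → EReal) : X → EReal :=
  fun x => ⨆ G : {G : X → EReal // LevelConvex G ∧ G ≤ F}, (G : X → EReal) x

/-- The lower semicontinuous level convex envelope `F^{lslc}`: the pointwise supremum
of all functions below `F` which are both lower semicontinuous and level convex. -/
noncomputable def lslcEnv [TopologicalSpace X] [AddCommGroup X] [Module ℝ X]
    (F : X → EReal) : X → EReal :=
  fun x => ⨆ G : {G : X → EReal // LowerSemicontinuous G ∧ LevelConvex G ∧ G ≤ F},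
    (G : X → EReal) x

/-!
The sublevel sets of a level convex function are convex, so a level convex minorant of the
two-valued function `f = 0 on S, 1 off S` vanishes on the convex hull of `S`; hence `f^{lc}`
is `0` on `convexHull S` and `1` off it. For `S = C` the hull is `D`, which is not closed:
`(1, 1)` lies in its closure but not in it. Every lower semicontinuous minorant of `f^{lc}`
has closed sublevel sets and so vanishes at `(1, 1)`, whereas `f` is already lower
semicontinuous and `(f^{ls})^{lc}(1, 1) = f^{lc}(1, 1) = 1`.
-/

open Set

section LevelConvex

variable [AddCommGroup X] [Module ℝ X]

theorem levelConvex_iff_convex_setOf_le {F : X → EReal} :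
    LevelConvex F ↔ ∀ c, Convex ℝ {x | F x ≤ c} := by
  constructor
  · intro hF c
    refine convex_iff_forall_pos.2 fun x hx y hy a b ha hb hab => ?_
    obtain rfl : b = 1 - a := by linarith
    exact (hF x y a ha (by linarith)).trans (max_le hx hy)
  · intro hF x y t ht0 ht1
    exact hF _ (le_max_left (F x) (F y)) (le_max_right (F x) (F y)) ht0.le (by linarith)
      (by ring)

theorem LevelConvex.le_of_mem_convexHull {F : X → EReal} (hF : LevelConvex F) {S : Set X}
    {c : EReal} (hS : ∀ y ∈ S, F y ≤ c) {x : X} (hx : x ∈ convexHull ℝ S) : F x ≤ c :=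
  convexHull_min hS (levelConvex_iff_convex_setOf_le.1 hF c) hx

open Classical in
theorem levelConvex_ite {S : Set X} (hS : Convex ℝ S) {a b : EReal} (hab : a ≤ b) :
    LevelConvex fun x => if x ∈ S then a else b := by
  intro x y t ht0 ht1
  dsimp only
  by_cases hxy : x ∈ S ∧ y ∈ S
  · rw [if_pos (hS hxy.1 hxy.2 ht0.le (by linarith) (by ring)), if_pos hxy.1]
    exact le_max_left _ _
  · have hite : ∀ z, (if z ∈ S then a else b) ≤ b := fun z => by split_ifs <;> simp [hab]
    refine (hite _).trans ?_
    rcases not_and_or.1 hxy with hx | hy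
    · simp [hx]
    · simp [hy]

theorem le_lcEnv {F G : X → EReal} (hG : LevelConvex G) (hGF : G ≤ F) : G ≤ lcEnv F :=
  fun x => le_iSup (fun H : {H : X → EReal // LevelConvex H ∧ H ≤ F} => H.1 x) ⟨G, hG, hGF⟩

theorem lcEnv_le {F G : X → EReal} (h : ∀ H, LevelConvex H → H ≤ F → H ≤ G) :
    lcEnv F ≤ G :=
  fun x => iSup_le fun H => h H.1 H.2.1 H.2.2 x

open Classical in
theorem lcEnv_ite {S : Set X} {a b : EReal} (hab : a ≤ b) :
    lcEnv (fun x => if x ∈ S then a else b) = fun x => if x ∈ convexHull ℝ S then a else b := by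
  have hite : ∀ T : Set X, ∀ x, (if x ∈ T then a else b) ≤ b := fun T x => by
    split_ifs <;> simp [hab]
  refine le_antisymm (lcEnv_le fun H hH hHF x => ?_) (le_lcEnv ?_ fun x => ?_)
  · by_cases hx : x ∈ convexHull ℝ S
    · rw [if_pos hx]
      exact hH.le_of_mem_convexHull (fun y hy => (hHF y).trans_eq (if_pos hy)) hx
    · rw [if_neg hx]
      exact (hHF x).trans (hite S x)
  · exact levelConvex_ite (convex_convexHull ℝ S) hab
  · by_cases hx : x ∈ S
    · simp [hx, subset_convexHull ℝ S hx]
    · rw [if_neg hx]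
      exact hite _ x

end LevelConvex

section Semicontinuity

variable [TopologicalSpace X]

open Classical in
theorem lowerSemicontinuous_ite {S : Set X} (hS : IsClosed S) {a b : EReal} (hab : a ≤ b) :
    LowerSemicontinuous fun x => if x ∈ S then a else b := by
  intro x c hc
  dsimp only at hc ⊢
  by_cases hx : x ∈ S
  · rw [if_pos hx] at hc
    filter_upwards with y
    split_ifs
    exacts [hc, hc.trans_le hab]
  · rw [if_neg hx] at hc
    filter_upwards [hS.isOpen_compl.mem_nhds hx] with y hy
    rwa [if_neg hy]

theorem lscEnv_eq_self {F : X → EReal} (hF : LowerSemicontinuous F) : lscEnv F = F :=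
  funext fun x => le_antisymm (iSup_le fun G => G.2.2 x)
    (le_iSup (fun G : {G : X → EReal // LowerSemicontinuous G ∧ G ≤ F} => G.1 x) ⟨F, hF, le_rfl⟩)

theorem lscEnv_le_of_mem_closure {F : X → EReal} {c : EReal} {x : X}
    (hx : x ∈ closure {y | F y ≤ c}) : lscEnv F x ≤ c :=
  iSup_le fun G => closure_minimal (fun y hy => (G.2.2 y).trans hy) (G.2.1.isClosed_preimage c) hx

end Semicontinuity

theorem Convex.union_singleton {𝕜 E : Type*} [Field 𝕜] [LinearOrder 𝕜] [IsStrictOrderedRing 𝕜]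
    [AddCommGroup E] [Module 𝕜 E] {s : Set E} {x : E} (hs : Convex 𝕜 s)
    (hx : ∀ y ∈ s, openSegment 𝕜 x y ⊆ s) : Convex 𝕜 (s ∪ {x}) := by
  refine convex_iff_openSegment_subset.2 ?_
  rintro y (hy | rfl) z (hz | rfl)
  · exact (hs.openSegment_subset hy hz).trans subset_union_left
  · rw [openSegment_symm]
    exact (hx y hy).trans subset_union_left
  · exact (hx z hz).trans subset_union_left
  · rw [openSegment_same]
    exact subset_union_right

theorem convexHull_xAxis_union_singleton :
    convexHull ℝ ({p : ℝ × ℝ | p.2 = 0} ∪ {((0 : ℝ), (1 : ℝ))}) =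
      {p : ℝ × ℝ | 0 ≤ p.2 ∧ p.2 < 1} ∪ {((0 : ℝ), (1 : ℝ))} := by
  have hstrip : Convex ℝ {p : ℝ × ℝ | 0 ≤ p.2 ∧ p.2 < 1} :=
    (convex_Ico 0 1).linear_preimage (LinearMap.snd ℝ ℝ ℝ)
  have hconvex : Convex ℝ ({p : ℝ × ℝ | 0 ≤ p.2 ∧ p.2 < 1} ∪ {((0 : ℝ), (1 : ℝ))}) := by
    refine hstrip.union_singleton ?_
    rintro q ⟨hq0, hq1⟩ z ⟨a, b, ha, hb, hab, rfl⟩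
    refine ⟨?_, ?_⟩ <;> simp only [Prod.snd_add, Prod.smul_snd, smul_eq_mul] <;> nlinarith
  refine (convexHull_min ?_ hconvex).antisymm ?_
  · rintro p (hp | rfl)
    · exact Or.inl ⟨hp.ge, hp ▸ zero_lt_one⟩
    · exact Or.inr rfl
  rintro p (⟨hp0, hp1⟩ | rfl)
  · rcases hp0.eq_or_lt with h0 | h0
    · exact subset_convexHull ℝ _ (Or.inl h0.symm)
    -- `p` lies on the segment from `(0, 1)` to the point where the line through them meets the x-axis.
    refine segment_subset_convexHull (x := ((0 : ℝ), (1 : ℝ))) (y := (p.1 / (1 - p.2), (0 : ℝ)))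
      (Or.inr rfl) (Or.inl rfl) ⟨p.2, 1 - p.2, h0.le, by linarith, by ring, ?_⟩
    have hne : 1 - p.2 ≠ 0 := by linarith
    ext <;> simp [field]
  · exact subset_convexHull ℝ _ (Or.inr rfl)

theorem one_one_mem_closure_diff :
    ((1 : ℝ), (1 : ℝ)) ∈ closure ({p : ℝ × ℝ | 0 ≤ p.2 ∧ p.2 < 1} ∪ {((0 : ℝ), (1 : ℝ))}) \
      ({p : ℝ × ℝ | 0 ≤ p.2 ∧ p.2 < 1} ∪ {((0 : ℝ), (1 : ℝ))}) := by
  refine ⟨closure_mono (s := {(1 : ℝ)} ×ˢ Ico 0 1) ?_ ?_, ?_⟩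
  · rintro ⟨x, y⟩ ⟨-, hy⟩
    exact Or.inl hy
  · rw [closure_prod_eq, closure_singleton, closure_Ico zero_ne_one]
    exact ⟨rfl, zero_le_one, le_rfl⟩
  · rintro (⟨-, h⟩ | h)
    · exact lt_irrefl _ h
    · simp at h

open Classical in
/-- the characteristic-type function of `C = (ℝ×{0}) ∪ {(0,1)}` is lower
semicontinuous, its level convex envelope is the characteristic-type function of
`D = (ℝ×[0,1)) ∪ {(0,1)}`, which is not lower semicontinuous; in particular
`(f^{lc})^{ls}` can be strictly smaller than `(f^{ls})^{lc}`. -/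
theorem stmt11
    (C : Set (ℝ × ℝ)) (hC : C = {p : ℝ × ℝ | p.2 = 0} ∪ {((0 : ℝ), (1 : ℝ))})
    (D : Set (ℝ × ℝ))
    (hD : D = {p : ℝ × ℝ | 0 ≤ p.2 ∧ p.2 < 1} ∪ {((0 : ℝ), (1 : ℝ))})
    (f : ℝ × ℝ → EReal) (hf : f = fun p => if p ∈ C then 0 else 1) :
    LowerSemicontinuous f ∧
      (lcEnv f = fun p => if p ∈ D then 0 else 1) ∧
      ¬ LowerSemicontinuous (lcEnv f) ∧
      ∃ p : ℝ × ℝ, lscEnv (lcEnv f) p < lcEnv (lscEnv f) p := by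
  have hlc : lcEnv f = fun p => if p ∈ D then 0 else 1 := by
    rw [hf, lcEnv_ite zero_le_one, hC, convexHull_xAxis_union_singleton, hD]
  have hlsc : LowerSemicontinuous f := by
    rw [hf, hC]
    exact lowerSemicontinuous_ite
      ((isClosed_eq continuous_snd continuous_const).union isClosed_singleton) zero_le_one
  obtain ⟨hclos, hnot⟩ : ((1 : ℝ), (1 : ℝ)) ∈ closure D \ D := hD ▸ one_one_mem_closure_diff
  have hval : lcEnv f (1, 1) = 1 := by simp [hlc, hnot]
  have hzero : lscEnv (lcEnv f) (1, 1) ≤ 0 :=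
    lscEnv_le_of_mem_closure (closure_mono (fun p hp => by simp [hlc, hp]) hclos)
  refine ⟨hlsc, hlc, fun h => ?_, (1, 1), ?_⟩
  · rw [lscEnv_eq_self h, hval] at hzero
    exact absurd hzero (by norm_num)
  · rw [lscEnv_eq_self hlsc, hval]
    exact hzero.trans_lt zero_lt_one
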